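/- Every non-connected quandle Q decomposes uniquely as the semidisjoint union of its Inn(Q)-orbits: Q = #(Q₁,...,Qₙ, G), where Qᵢ are the orbits with their restricted operations and G = (g_{i,j}) is the matrix of group homomorphisms g_{i,j} : Γ_{Q_i} → Aut(Q_j) determined by g_{i,j}(|y|) = S_y|_{Q_j}; i.e., the subquandles (Qᵢ, ▷ᵢ) and the homomorphisms g_{i,j} are uniquely determined by Q. -/

import Mathlib

universe u

/-- A quandle with a *right* self-distributive operation `x ▷ y`, following
Ehrman–Gurpinar–Thibault–Yetter. -/
class RQuandle (Q : Type u) where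
  act : Q → Q → Q
  act_self : ∀ x : Q, act x x = x
  act_rinv : ∀ a b : Q, ∃! y, act y a = b
  act_distrib : ∀ a b c : Q, act (act a b) c = act (act a c) (act b c)

infixl:65 " ▷ " => RQuandle.act

namespace RQuandle

variable {Q : Type u} [RQuandle Q]

/-- The inner automorphism `S_y : x ↦ x ▷ y`, as a permutation of `Q`. -/
noncomputable def SPerm (y : Q) : Equiv.Perm Q :=
  Equiv.ofBijective (fun x => x ▷ y)
    ⟨fun a b h => by
        obtain ⟨c, _, hu⟩ := RQuandle.act_rinv y (b ▷ y)
        exact (hu a h).trans (hu b rfl).symm,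
      fun b => (RQuandle.act_rinv y b).exists⟩

@[simp] lemma SPerm_apply (x y : Q) : SPerm y x = x ▷ y := rfl

/-- The inner automorphism group of a quandle: the subgroup of `Equiv.Perm Q`
generated by the maps `S_y`. -/
def Inn (Q : Type u) [RQuandle Q] : Subgroup (Equiv.Perm Q) :=
  Subgroup.closure (Set.range (SPerm : Q → Equiv.Perm Q))

lemma SPerm_mem_Inn (y : Q) : SPerm y ∈ Inn Q :=
  Subgroup.subset_closure ⟨y, rfl⟩

/-- A quandle is (algebraically) connected when `Inn Q` acts transitively. -/
def Connected (Q : Type u) [RQuandle Q] : Prop :=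
  ∀ x y : Q, ∃ p ∈ Inn Q, p x = y

/-- The orbit of `s` under the inner automorphism group. -/
def orbitSet (s : Q) : Set Q := {t | ∃ p ∈ Inn Q, p s = t}

/-- `f` is an automorphism of the quandle `Q`. -/
def IsQAut (f : Equiv.Perm Q) : Prop := ∀ x y : Q, f (x ▷ y) = f x ▷ f y

/-- Key conjugation identity: in left-to-right (right action) convention this is
`S_{x ▷ y} = S_y⁻¹ S_x S_y`. -/
lemma SPerm_conj (x y : Q) : SPerm (x ▷ y) = SPerm y * SPerm x * (SPerm y)⁻¹ := by
  rw [eq_mul_inv_iff_mul_eq]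
  ext u
  simp only [Equiv.Perm.mul_apply, SPerm_apply]
  exact (RQuandle.act_distrib u x y).symm

/-- Relators for the universal augmentation group `Γ_Q`: `|x ▷ y| = |y|⁻¹ |x| |y|`. -/
def augRels (Q : Type u) [RQuandle Q] : Set (FreeGroup Q) :=
  {w | ∃ x y : Q,
    w = FreeGroup.of (x ▷ y) * ((FreeGroup.of y)⁻¹ * FreeGroup.of x * FreeGroup.of y)⁻¹}

/-- The universal augmentation group `Γ_Q` of a quandle. -/
abbrev Gamma (Q : Type u) [RQuandle Q] := PresentedGroup (augRels Q)

/-- The generator `|x| ∈ Γ_Q`. -/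
def gen (x : Q) : Gamma Q := PresentedGroup.of x

/-- The canonical homomorphism `Γ_Q → Aut(Q)` sending `|y|` to `S_y`.  Since the
paper composes automorphisms as right actions, this is a homomorphism into the
opposite of the permutation group. -/
noncomputable def canHom (Q : Type u) [RQuandle Q] : Gamma Q →* (Equiv.Perm Q)ᵐᵒᵖ :=
  PresentedGroup.toGroup (f := fun y => MulOpposite.op (SPerm y)) (by
    rintro w ⟨x, y, rfl⟩
    simp only [map_mul, map_inv, FreeGroup.lift_apply_of]
    rw [← MulOpposite.op_inv, ← MulOpposite.op_mul, ← MulOpposite.op_mul, SPerm_conj]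
    simp [mul_assoc])

@[simp] lemma canHom_gen (y : Q) : canHom Q (gen y) = MulOpposite.op (SPerm y) :=
  PresentedGroup.toGroup.of _

lemma orbit_act_mem {s x : Q} (y : Q) (hx : x ∈ orbitSet s) : x ▷ y ∈ orbitSet s := by
  obtain ⟨p, hp, rfl⟩ := hx
  exact ⟨SPerm y * p, mul_mem (SPerm_mem_Inn y) hp, rfl⟩

lemma orbit_actinv_mem {s x : Q} (y : Q) (hx : x ∈ orbitSet s) :
    (SPerm y).symm x ∈ orbitSet s := by
  obtain ⟨p, hp, rfl⟩ := hx
  exact ⟨(SPerm y)⁻¹ * p, mul_mem (inv_mem (SPerm_mem_Inn y)) hp, rfl⟩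

lemma orbit_mem_iff (t : Q) (y : Q) {u : Q} :
    u ∈ orbitSet t ↔ u ▷ y ∈ orbitSet t := by
  constructor
  · exact fun h => orbit_act_mem y h
  · intro h
    have := orbit_actinv_mem y h
    rw [← SPerm_apply u y, Equiv.symm_apply_apply] at this
    exact this

/-- Each orbit of `Inn Q` is a subquandle. -/
instance orbitQuandle (s : Q) : RQuandle (orbitSet s) where
  act a b := ⟨a.1 ▷ b.1, orbit_act_mem b.1 a.2⟩
  act_self a := Subtype.ext (RQuandle.act_self a.1)
  act_rinv a b := by
    refine ⟨⟨(SPerm a.1).symm b.1, orbit_actinv_mem a.1 b.2⟩, Subtype.ext ?_, ?_⟩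
    · exact (SPerm a.1).apply_symm_apply b.1
    · rintro ⟨z, hz⟩ h
      apply Subtype.ext
      have hz' : z ▷ a.1 = b.1 := congrArg Subtype.val h
      show z = (SPerm a.1).symm b.1
      rw [← hz']
      exact ((SPerm a.1).symm_apply_apply z).symm
  act_distrib a b c := Subtype.ext (RQuandle.act_distrib a.1 b.1 c.1)

/-- Restriction of `S_x` to the orbit of `t`. -/
noncomputable def phi (t : Q) (x : Q) : Equiv.Perm (orbitSet t) :=
  (SPerm x).subtypePerm (fun u => (orbit_mem_iff t x (u := u)).symm)

/-- The quandle axioms, as a predicate on a binary operation. -/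
def IsRQuandleOp {A : Type u} (op : A → A → A) : Prop :=
  (∀ x, op x x = x) ∧ (∀ a b, ∃! y, op y a = b) ∧
    ∀ a b c, op (op a b) c = op (op a c) (op b c)

end RQuandle

/-! The `Inn Q`-orbits partition `Q` as the orbits of any group action do, and `Inn Q` maps every
orbit to itself, so each `S_y` restricts to an automorphism of each orbit. These restrictions
satisfy the defining relations `|x ▷ y| = |y|⁻¹ |x| |y|` of `Γ`, hence induce `g_{i,j}`, which
is unique because the `|y|` generate `Γ`. -/

namespace RQuandle

variable {Q : Type u} [RQuandle Q]

lemma mem_orbitSet_self (x : Q) : x ∈ orbitSet x := ⟨1, one_mem _, rfl⟩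

lemma orbitSet_eq_of_mem {s u : Q} (h : u ∈ orbitSet s) : orbitSet u = orbitSet s := by
  obtain ⟨q, hq, rfl⟩ := h
  ext v
  constructor
  · rintro ⟨p, hp, rfl⟩
    exact ⟨p * q, mul_mem hp hq, rfl⟩
  · rintro ⟨p, hp, rfl⟩
    exact ⟨p * q⁻¹, mul_mem hp (inv_mem hq), by simp⟩

lemma orbitSet_eq_or_disjoint (s t : Q) :
    orbitSet s = orbitSet t ∨ Disjoint (orbitSet s) (orbitSet t) := by
  refine or_iff_not_imp_right.mpr fun h => ?_
  obtain ⟨u, hus, hut⟩ := Set.not_disjoint_iff.mp h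
  rw [← orbitSet_eq_of_mem hus, orbitSet_eq_of_mem hut]

variable (Q) in
def autSubgroup : Subgroup (Equiv.Perm Q) where
  carrier := {f | IsQAut f}
  one_mem' _ _ := rfl
  mul_mem' {f g} hf hg x y := by
    simp only [Equiv.Perm.mul_apply, hg x y, hf (g x) (g y)]
  inv_mem' {f} hf x y := f.injective <| by rw [(hf : IsQAut f)]; simp

@[simp] lemma phi_apply_coe (t x : Q) (u : orbitSet t) :
    ((phi t x u : orbitSet t) : Q) = (u : Q) ▷ x := rfl

lemma phi_mem_autSubgroup (t x : Q) : phi t x ∈ autSubgroup (orbitSet t) :=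
  fun a b => Subtype.ext (act_distrib (a : Q) (b : Q) x)

lemma phi_act (t x y : Q) : phi t (x ▷ y) = phi t y * phi t x * (phi t y)⁻¹ := by
  rw [eq_mul_inv_iff_mul_eq]
  ext u
  exact (act_distrib (u : Q) x y).symm

namespace Gamma

variable {G : Type*} [Group G]

noncomputable def lift (f : Q → G) (hf : ∀ x y, f (x ▷ y) = (f y)⁻¹ * f x * f y) :
    Gamma Q →* G :=
  PresentedGroup.toGroup (f := f) (by
    rintro w ⟨x, y, rfl⟩
    simp [hf])

@[simp] lemma lift_gen (f : Q → G) (hf : ∀ x y, f (x ▷ y) = (f y)⁻¹ * f x * f y) (x : Q) :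
    lift f hf (gen x) = f x :=
  PresentedGroup.toGroup.of _

lemma hom_ext {φ ψ : Gamma Q →* G} (h : ∀ x, φ (gen x) = ψ (gen x)) : φ = ψ :=
  PresentedGroup.ext h

lemma map_mem_of_forall_gen_mem (φ : Gamma Q →* G) {H : Subgroup G} (h : ∀ x, φ (gen x) ∈ H)
    (w : Gamma Q) : φ w ∈ H :=
  PresentedGroup.generated_by _ (H.comap φ) h w

end Gamma

/-- The homomorphism `g_{i,j} : Γ_{Q_i} → Aut(Q_j)` for `Q_i = orbitSet s`, `Q_j = orbitSet t`. -/
noncomputable def orbitHom (s t : Q) : Gamma (orbitSet s) →* (Equiv.Perm (orbitSet t))ᵐᵒᵖ :=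
  Gamma.lift (fun y => MulOpposite.op (phi t (y : Q))) fun x y => by
    rw [← MulOpposite.op_inv, ← MulOpposite.op_mul, ← MulOpposite.op_mul, ← mul_assoc]
    exact congrArg MulOpposite.op (phi_act t x y)

@[simp] lemma orbitHom_gen (s t : Q) (y : orbitSet s) :
    orbitHom s t (gen y) = MulOpposite.op (phi t (y : Q)) :=
  Gamma.lift_gen _ _ y

lemma orbitHom_mem_autSubgroup (s t : Q) (w : Gamma (orbitSet s)) :
    (orbitHom s t w).unop ∈ autSubgroup (orbitSet t) :=
  Gamma.map_mem_of_forall_gen_mem (H := (autSubgroup _).op) _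
    (fun y => by simpa using phi_mem_autSubgroup t (y : Q)) w

lemma eq_orbitHom {s t : Q} (g : Gamma (orbitSet s) →* (Equiv.Perm (orbitSet t))ᵐᵒᵖ)
    (hg : ∀ (y : orbitSet s) (x : orbitSet t),
      (((g (gen y)).unop x : orbitSet t) : Q) = (x : Q) ▷ (y : Q)) :
    g = orbitHom s t :=
  Gamma.hom_ext fun y => MulOpposite.unop_injective <| by
    ext x
    simpa using hg y x

end RQuandle

open RQuandle in
theorem semidisjoint_decomposition {Q : Type u} [RQuandle Q] :
    (∀ x : Q, x ∈ orbitSet x) ∧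
    (∀ s t : Q, orbitSet s = orbitSet t ∨ Disjoint (orbitSet s) (orbitSet t)) ∧
    ∀ s t : Q, ∃! g : Gamma (orbitSet s) →* (Equiv.Perm (orbitSet t))ᵐᵒᵖ,
      (∀ w : Gamma (orbitSet s), IsQAut ((g w).unop)) ∧
      ∀ (y : orbitSet s) (x : orbitSet t),
        (((g (gen y)).unop x : orbitSet t) : Q) = (x : Q) ▷ (y : Q) := by
  refine ⟨mem_orbitSet_self, orbitSet_eq_or_disjoint, fun s t => ?_⟩
  refine ⟨orbitHom s t, ⟨orbitHom_mem_autSubgroup s t, fun y x => ?_⟩,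
    fun g hg => eq_orbitHom g hg.2⟩
  simp
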